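/- arXiv:2110.12782 — 5 statements merged into one kernel-verified Lean document; each statement's English description precedes it below -/
import Mathlib

section
/- Let A be an n×n real symmetric matrix with nonnegative entries and no zero rows, let D be the diagonal matrix whose i-th diagonal entry d_i is the i-th row sum of A, and assume every d_i ≥ 1. Let α ∈ (0, 1/2], let k < n, let ε ≥ 0, and let U ∈ ℝ^{n×k}, Λ ∈ ℝ^{k×k} be matrices satisfying the approximation guarantee ‖D^{-α} A D^{-α} − U Λ Uᵀ‖_F ≤ (1+ε)·√(Σ_{j=k+1}^{n} |λ_j|²), where |λ_1| ≥ |λ_2| ≥ … ≥ |λ_n| are the decreasingly ordered absolute values of the eigenvalues of the symmetric matrix D^{-α} A D^{-α}. Then ‖D^{-1/2} A D^{-1/2} − D^{-1/2+α} U Λ Uᵀ D^{-1/2+α}‖_F ≤ (1+ε)·√(Σ_{j=k+1}^{n} |λ_j|²). -/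
open Matrix

/-- Frobenius norm of a real matrix: `√(Σᵢⱼ Xᵢⱼ²)`. -/
noncomputable def frobNorm {m n : ℕ} (X : Matrix (Fin m) (Fin n) ℝ) : ℝ :=
  Real.sqrt (∑ i, ∑ j, X i j ^ 2)

/-! Since `D^{-1/2} = D^{-1/2+α} D^{-α}`, the error matrix for the normalized matrix is the error
matrix for `D^{-α} A D^{-α}` scaled on both sides by `D^{-1/2+α}`. When all `dᵢ ≥ 1` and
`α ≤ 1/2` the entries of this diagonal scaling lie in `[0, 1]`, so it can only shrink every
entry, hence the Frobenius norm. -/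

theorem frobNorm_le_of_sq_le {m n : ℕ} {X Y : Matrix (Fin m) (Fin n) ℝ}
    (h : ∀ i j, X i j ^ 2 ≤ Y i j ^ 2) : frobNorm X ≤ frobNorm Y :=
  Real.sqrt_le_sqrt <| Finset.sum_le_sum fun i _ => Finset.sum_le_sum fun j _ => h i j

theorem frobNorm_diagonal_mul_mul_diagonal_le {m n : ℕ} {a : Fin m → ℝ} {b : Fin n → ℝ}
    (ha : ∀ i, |a i| ≤ 1) (hb : ∀ j, |b j| ≤ 1) (X : Matrix (Fin m) (Fin n) ℝ) :
    frobNorm (diagonal a * X * diagonal b) ≤ frobNorm X := by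
  refine frobNorm_le_of_sq_le fun i j => ?_
  have hab : (a i * b j) ^ 2 ≤ 1 := by
    rw [← sq_abs, abs_mul]
    exact pow_le_one₀ (by positivity) (mul_le_one₀ (ha i) (abs_nonneg _) (hb j))
  calc (diagonal a * X * diagonal b) i j ^ 2 = (a i * b j) ^ 2 * X i j ^ 2 := by
        rw [mul_diagonal, diagonal_mul]; ring
    _ ≤ X i j ^ 2 := mul_le_of_le_one_left (sq_nonneg _) hab

theorem diagonal_mul_diagonal_mul_mul_diagonal_mul_diagonal {ι R : Type*} [Fintype ι]
    [DecidableEq ι] [CommSemiring R] (a b : ι → R) (X : Matrix ι ι R) :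
    diagonal a * (diagonal b * X * diagonal b) * diagonal a =
      diagonal (fun i => a i * b i) * X * diagonal (fun i => a i * b i) := by
  rw [← diagonal_mul_diagonal]
  nth_rw 2 [(commute_diagonal a b).eq]
  simp only [Matrix.mul_assoc]

theorem abs_rpow_le_one_of_one_le_of_nonpos {x y : ℝ} (hx : 1 ≤ x) (hy : y ≤ 0) :
    |x ^ y| ≤ 1 := by
  rw [abs_of_nonneg (Real.rpow_nonneg (zero_le_one.trans hx) y)]
  exact Real.rpow_le_one_of_one_le_of_nonpos hx hy

theorem netmfplus_main_bound_general {n k : ℕ} (hk : k < n)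
    (A : Matrix (Fin n) (Fin n) ℝ)
    (d : Fin n → ℝ)
    (hd1 : ∀ i, 1 ≤ d i)
    (α : ℝ) (hα : α ≤ 1 / 2)
    (ε : ℝ)
    (U : Matrix (Fin n) (Fin k) ℝ) (Λ : Matrix (Fin k) (Fin k) ℝ)
    (N : Matrix (Fin n) (Fin n) ℝ)
    (hN : N = Matrix.diagonal (fun i => d i ^ (-α)) * A * Matrix.diagonal (fun i => d i ^ (-α)))
    -- `lamAbs` is the decreasing rearrangement of the absolute values of the
    -- eigenvalues of `N = D^{-α} A D^{-α}` (counted with multiplicity)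
    (lamAbs : Fin n → ℝ)
    (happrox : frobNorm (N - U * Λ * Uᵀ) ≤
      (1 + ε) * Real.sqrt (∑ j ∈ Finset.Ici (⟨k, hk⟩ : Fin n), lamAbs j ^ 2)) :
    frobNorm
        (Matrix.diagonal (fun i => d i ^ (-(1 : ℝ) / 2)) * A *
            Matrix.diagonal (fun i => d i ^ (-(1 : ℝ) / 2)) -
          Matrix.diagonal (fun i => d i ^ (-(1 : ℝ) / 2 + α)) * (U * Λ * Uᵀ) *
            Matrix.diagonal (fun i => d i ^ (-(1 : ℝ) / 2 + α))) ≤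
      (1 + ε) * Real.sqrt (∑ j ∈ Finset.Ici (⟨k, hk⟩ : Fin n), lamAbs j ^ 2) := by
  set s : Fin n → ℝ := fun i => d i ^ (-(1 : ℝ) / 2 + α)
  have hs : ∀ i, |s i| ≤ 1 := fun i => abs_rpow_le_one_of_one_le_of_nonpos (hd1 i) (by linarith)
  have hsplit : (fun i => d i ^ (-(1 : ℝ) / 2)) = fun i => s i * d i ^ (-α) := by
    ext i
    simp only [s, ← Real.rpow_add (zero_lt_one.trans_le (hd1 i))]
    ring_nf
  have hfactor : diagonal (fun i => d i ^ (-(1 : ℝ) / 2)) * A *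
        diagonal (fun i => d i ^ (-(1 : ℝ) / 2)) - diagonal s * (U * Λ * Uᵀ) * diagonal s =
      diagonal s * (N - U * Λ * Uᵀ) * diagonal s := by
    rw [Matrix.mul_sub, Matrix.sub_mul, hN, diagonal_mul_diagonal_mul_mul_diagonal_mul_diagonal,
      ← hsplit]
  rw [hfactor]
  exact (frobNorm_diagonal_mul_mul_diagonal_le hs hs _).trans happrox

/-- approximation guarantee transfers from the modified Laplacian
`D^{-α} A D^{-α}` to the normalized one `D^{-1/2} A D^{-1/2}`. -/
theorem netmfplus_main_bound {n k : ℕ} (hk : k < n)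
    (A : Matrix (Fin n) (Fin n) ℝ) (hA : A.IsHermitian)
    (hApos : ∀ i j, 0 ≤ A i j)
    (d : Fin n → ℝ) (hd : ∀ i, d i = ∑ j, A i j)
    (hd1 : ∀ i, 1 ≤ d i)
    (α : ℝ) (hα0 : 0 < α) (hα : α ≤ 1 / 2)
    (ε : ℝ) (hε : 0 ≤ ε)
    (U : Matrix (Fin n) (Fin k) ℝ) (Λ : Matrix (Fin k) (Fin k) ℝ)
    (N : Matrix (Fin n) (Fin n) ℝ)
    (hN : N = Matrix.diagonal (fun i => d i ^ (-α)) * A * Matrix.diagonal (fun i => d i ^ (-α)))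
    (hNsymm : N.IsHermitian)
    -- `lamAbs` is the decreasing rearrangement of the absolute values of the
    -- eigenvalues of `N = D^{-α} A D^{-α}` (counted with multiplicity)
    (lamAbs : Fin n → ℝ) (e : Fin n ≃ Fin n)
    (hlam : ∀ i, lamAbs i = |hNsymm.eigenvalues (e i)|)
    (hmono : Antitone lamAbs)
    (happrox : frobNorm (N - U * Λ * Uᵀ) ≤
      (1 + ε) * Real.sqrt (∑ j ∈ Finset.Ici (⟨k, hk⟩ : Fin n), lamAbs j ^ 2)) :
    frobNorm
        (Matrix.diagonal (fun i => d i ^ (-(1 : ℝ) / 2)) * A *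
            Matrix.diagonal (fun i => d i ^ (-(1 : ℝ) / 2)) -
          Matrix.diagonal (fun i => d i ^ (-(1 : ℝ) / 2 + α)) * (U * Λ * Uᵀ) *
            Matrix.diagonal (fun i => d i ^ (-(1 : ℝ) / 2 + α))) ≤
      (1 + ε) * Real.sqrt (∑ j ∈ Finset.Ici (⟨k, hk⟩ : Fin n), lamAbs j ^ 2) :=
  netmfplus_main_bound_general hk A d hd1 α hα ε U Λ N hN lamAbs happrox
end

section
/- (Eckart–Young, Frobenius-norm lower bound) Let X be an m×n real matrix with decreasingly ordered singular values σ_1(X) ≥ σ_2(X) ≥ … ≥ σ_{min(m,n)}(X), and let k < min(m,n). Then for every m×n real matrix B of rank at most k, ‖X − B‖_F ≥ √(Σ_{j=k+1}^{min(m,n)} σ_j(X)²). -/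
/-!
Let `w₁, …, w_d` be an orthonormal basis of `ker B`, so `d ≥ n - k`. Since `B wᵢ = 0`,
`∑ ‖X wᵢ‖² = ∑ ‖(X - B) wᵢ‖² ≤ ‖X - B‖_F²` (Bessel's inequality for the rows of `X - B`).
Expanding in an orthonormal eigenbasis `uⱼ` of `XᵀX` gives `∑ ‖X wᵢ‖² = ∑ⱼ σⱼ² cⱼ` with weights
`cⱼ = ∑ᵢ ⟪wᵢ, uⱼ⟫²` in `[0, 1]` (Bessel) summing to `d` (Parseval), and any such weighting of the
decreasing sequence `σⱼ²` dominates the sum of its last `n - k` terms.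
-/

open Matrix

/-- The singular values of a real matrix `X`: the nonnegative square roots of the
eigenvalues of the positive semidefinite matrix `XᵀX`, counted with multiplicity. -/
noncomputable def singularValues {m n : ℕ} (X : Matrix (Fin m) (Fin n) ℝ) : Fin n → ℝ :=
  fun i => Real.sqrt ((by simpa [Matrix.conjTranspose_eq_transpose_of_trivial] using
        Matrix.isHermitian_conjTranspose_mul_self X :
      (Xᵀ * X).IsHermitian).eigenvalues i)

open Finset WithLp
open scoped RealInnerProductSpace

section InnerProductSpace

variable {ι κ E : Type*} [Fintype ι] [NormedAddCommGroup E] [InnerProductSpace ℝ E]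

theorem Orthonormal.sum_inner_sq_le {v : ι → E} (hv : Orthonormal ℝ v) (x : E) :
    ∑ i, ⟪v i, x⟫ ^ 2 ≤ ‖x‖ ^ 2 := by
  simpa only [Real.norm_eq_abs, sq_abs] using hv.sum_inner_products_le (s := univ) (x := x)

theorem OrthonormalBasis.sum_sum_inner_sq_eq_card [Fintype κ] (b : OrthonormalBasis κ ℝ E)
    {v : ι → E} (hv : Orthonormal ℝ v) : ∑ j, ∑ i, ⟪v i, b j⟫ ^ 2 = Fintype.card ι := by
  simp [sum_comm (γ := κ), b.sum_sq_inner_left, hv.1]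

end InnerProductSpace

theorem Finset.sum_Ici_le_sum_mul_of_antitone {ι : Type*} [Fintype ι] [LinearOrder ι]
    [LocallyFiniteOrderTop ι] {f c : ι → ℝ} (hf : Antitone f) (a : ι) (hfa : 0 ≤ f a)
    (hc0 : ∀ j, 0 ≤ c j) (hc1 : ∀ j, c j ≤ 1) (hc : (#(Ici a) : ℝ) ≤ ∑ j, c j) :
    ∑ j ∈ Ici a, f j ≤ ∑ j, f j * c j := by
  classical
  set δ : ι → ℝ := fun j => c j - if j ∈ Ici a then 1 else 0
  -- `f j - f a` and `δ j` always have the same sign, while `∑ δ ≥ 0`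
  have hδ : ∀ j, f a * δ j ≤ f j * δ j := by
    intro j
    by_cases hj : a ≤ j
    · simpa [δ, hj] using mul_le_mul_of_nonpos_right (hf hj) (sub_nonpos.2 (hc1 j))
    · simpa [δ, hj] using mul_le_mul_of_nonneg_right (hf (le_of_not_ge hj)) (hc0 j)
  have hsum := sum_le_sum fun j (_ : j ∈ univ) => hδ j
  simp only [δ, ← mul_sum, mul_sub, sum_sub_distrib, mul_ite, mul_one, mul_zero,
    sum_ite_mem, univ_inter, sum_const, nsmul_eq_mul] at hsum
  linarith [mul_le_mul_of_nonneg_left hc hfa]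

namespace Matrix

variable {m n ι : Type*} [Fintype n] [DecidableEq n] [Fintype ι]

theorem IsHermitian.toEuclideanLin_eigenvectorBasis {A : Matrix n n ℝ} (hA : A.IsHermitian)
    (j : n) :
    toEuclideanLin A (hA.eigenvectorBasis j) = hA.eigenvalues j • hA.eigenvectorBasis j := by
  ext i
  simpa using congrFun (hA.mulVec_eigenvectorBasis j) i

theorem IsHermitian.inner_toEuclideanLin_self {A : Matrix n n ℝ} (hA : A.IsHermitian)
    (w : EuclideanSpace ℝ n) :
    ⟪w, toEuclideanLin A w⟫ = ∑ j, hA.eigenvalues j * ⟪w, hA.eigenvectorBasis j⟫ ^ 2 := by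
  rw [← hA.eigenvectorBasis.sum_inner_mul_inner]
  refine sum_congr rfl fun j _ => ?_
  rw [← isSymmetric_toEuclideanLin_iff.mpr hA, hA.toEuclideanLin_eigenvectorBasis,
    real_inner_smul_left, real_inner_comm w]
  ring

theorem IsHermitian.sum_Ici_eigenvalues_le_sum_inner {A : Matrix n n ℝ} (hA : A.IsHermitian)
    {κ : Type*} [Fintype κ] [LinearOrder κ] [LocallyFiniteOrderTop κ] (e : κ ≃ n)
    (hanti : Antitone (hA.eigenvalues ∘ e)) (a : κ) (ha : 0 ≤ hA.eigenvalues (e a))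
    {w : ι → EuclideanSpace ℝ n} (hw : Orthonormal ℝ w) (hcard : #(Ici a) ≤ Fintype.card ι) :
    ∑ j ∈ Ici a, hA.eigenvalues (e j) ≤ ∑ i, ⟪w i, toEuclideanLin A (w i)⟫ := by
  set u := hA.eigenvectorBasis
  set c : n → ℝ := fun j => ∑ i, ⟪w i, u j⟫ ^ 2
  have hc_sum : ∑ j, c (e j) = Fintype.card ι := by
    rw [e.sum_comp, u.sum_sum_inner_sq_eq_card hw]
  calc ∑ j ∈ Ici a, hA.eigenvalues (e j) ≤ ∑ j, hA.eigenvalues (e j) * c (e j) :=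
        sum_Ici_le_sum_mul_of_antitone hanti a ha (fun _ => sum_nonneg fun _ _ => sq_nonneg _)
          (fun j => (hw.sum_inner_sq_le _).trans_eq (by rw [u.orthonormal.1, one_pow]))
          (by rw [hc_sum]; exact_mod_cast hcard)
    _ = ∑ j, hA.eigenvalues j * c j := e.sum_comp fun j => hA.eigenvalues j * c j
    _ = ∑ i, ⟪w i, toEuclideanLin A (w i)⟫ := by
      simp only [hA.inner_toEuclideanLin_self, c, mul_sum]
      exact sum_comm

theorem toEuclideanLin_apply_eq_inner (M : Matrix m n ℝ) (w : EuclideanSpace ℝ n) (r : m) :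
    toEuclideanLin M w r = ⟪toLp 2 (M r), w⟫ := by
  simp [EuclideanSpace.inner_eq_star_dotProduct, toLpLin_apply, mulVec, dotProduct_comm]

variable [Fintype m]

theorem norm_toEuclideanLin_sq (X : Matrix m n ℝ) (w : EuclideanSpace ℝ n) :
    ‖toEuclideanLin X w‖ ^ 2 = ⟪w, toEuclideanLin (Xᵀ * X) w⟫ := by
  classical
  rw [← real_inner_self_eq_norm_sq, ← conjTranspose_eq_transpose_of_trivial, toLpLin_mul_same,
    LinearMap.comp_apply, toEuclideanLin_conjTranspose_eq_adjoint, LinearMap.adjoint_inner_right]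

theorem sum_norm_toEuclideanLin_sq_le (M : Matrix m n ℝ) {w : ι → EuclideanSpace ℝ n}
    (hw : Orthonormal ℝ w) : ∑ i, ‖toEuclideanLin M (w i)‖ ^ 2 ≤ ∑ r, ∑ j, M r j ^ 2 := by
  calc ∑ i, ‖toEuclideanLin M (w i)‖ ^ 2 = ∑ r, ∑ i, ⟪w i, toLp 2 (M r)⟫ ^ 2 := by
        simp only [EuclideanSpace.norm_sq_eq, Real.norm_eq_abs, sq_abs,
          toEuclideanLin_apply_eq_inner, real_inner_comm]
        exact sum_comm
    _ ≤ ∑ r, ‖toLp 2 (M r)‖ ^ 2 := sum_le_sum fun r _ => hw.sum_inner_sq_le _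
    _ = ∑ r, ∑ j, M r j ^ 2 := by simp [EuclideanSpace.norm_sq_eq]

variable {𝕜 : Type*} [RCLike 𝕜]

theorem finrank_ker_toEuclideanLin (B : Matrix m n 𝕜) :
    Module.finrank 𝕜 (LinearMap.ker (toEuclideanLin B)) = Fintype.card n - B.rank := by
  have hrank : B.rank = Module.finrank 𝕜 (LinearMap.range (toEuclideanLin B)) :=
    B.rank_eq_finrank_range_toLin (PiLp.basisFun 2 𝕜 m) (PiLp.basisFun 2 𝕜 n)
  have := LinearMap.finrank_range_add_finrank_ker (toEuclideanLin B)
  rw [finrank_euclideanSpace] at this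
  omega

theorem exists_orthonormal_toEuclideanLin_eq_zero (B : Matrix m n 𝕜) :
    ∃ w : Fin (Fintype.card n - B.rank) → EuclideanSpace 𝕜 n,
      Orthonormal 𝕜 w ∧ ∀ i, toEuclideanLin B (w i) = 0 := by
  set K := LinearMap.ker (toEuclideanLin B)
  let b := (stdOrthonormalBasis 𝕜 K).reindex (finCongr (finrank_ker_toEuclideanLin B))
  exact ⟨fun i => b i, b.orthonormal.comp_linearIsometry K.subtypeₗᵢ, fun i => (b i).2⟩

end Matrix

/-- Eckart–Young, Frobenius-norm lower bound: for any matrix `B` of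
rank at most `k`, `‖X − B‖_F ≥ √(Σ_{j>k} σⱼ(X)²)`.  (0-based: the tail sum is over
indices `j ≥ k`; singular values with index beyond `min m n` vanish.) -/
theorem eckart_young_frobenius_lower_bound {m n k : ℕ}
    (X : Matrix (Fin m) (Fin n) ℝ)
    (σ : Fin n → ℝ) (e : Fin n ≃ Fin n)
    (hσ : ∀ i, σ i = singularValues X (e i))
    (hanti : Antitone σ)
    (hk : k < min m n)
    (B : Matrix (Fin m) (Fin n) ℝ) (hB : B.rank ≤ k) :
    Real.sqrt (∑ j ∈ Finset.Ici (⟨k, lt_of_lt_of_le hk (min_le_right m n)⟩ : Fin n), σ j ^ 2) ≤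
      frobNorm (X - B) := by
  have hA : (Xᵀ * X).IsHermitian := by
    simpa [conjTranspose_eq_transpose_of_trivial] using isHermitian_conjTranspose_mul_self X
  obtain ⟨w, hw, hBw⟩ := exists_orthonormal_toEuclideanLin_eq_zero B
  have hσ_sq : ∀ j, σ j ^ 2 = hA.eigenvalues (e j) := fun j => by
    rw [hσ]; exact Real.sq_sqrt (eigenvalues_conjTranspose_mul_self_nonneg X _)
  have hσ_nonneg : ∀ j, 0 ≤ σ j := fun j => hσ j ▸ Real.sqrt_nonneg _
  have hanti_sq : Antitone (hA.eigenvalues ∘ e) := fun i j hij => by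
    simpa only [Function.comp_apply, ← hσ_sq] using pow_le_pow_left₀ (hσ_nonneg j) (hanti hij) 2
  calc _ = √(∑ j ∈ Ici ⟨k, lt_of_lt_of_le hk (min_le_right m n)⟩, hA.eigenvalues (e j)) := by
        simp only [hσ_sq]
    _ ≤ √(∑ i, ⟪w i, toEuclideanLin (Xᵀ * X) (w i)⟫) := Real.sqrt_le_sqrt <|
      hA.sum_Ici_eigenvalues_le_sum_inner e hanti_sq _ (hσ_sq _ ▸ sq_nonneg _) hw
        (by simp only [Fin.card_Ici, Fintype.card_fin]; omega)
    _ = √(∑ i, ‖toEuclideanLin (X - B) (w i)‖ ^ 2) := by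
      simp only [map_sub, LinearMap.sub_apply, hBw, sub_zero, norm_toEuclideanLin_sq]
    _ ≤ frobNorm (X - B) := Real.sqrt_le_sqrt (sum_norm_toEuclideanLin_sq_le _ hw)
end

section
/- Let D be an n×n diagonal matrix with positive diagonal entries, let α be a real number, let U ∈ ℝ^{n×k}, let Λ ∈ ℝ^{k×k}, and set = D^{α} U Λ Uᵀ D^{α} and K = Uᵀ D^{-1+2α} U Λ (a k×k matrix). Then for every positive integer T, Σ_{r=1}^{T} (D^{-1} Â)^r D^{-1} = D^{-1+α} U Λ (Σ_{r=1}^{T} K^{r-1}) Uᵀ D^{-1+α}, where K⁰ denotes the k×k identity matrix. -/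
/-!
Writing `D⁻¹ Â = X Y` with `X = D^{-1+α} U Λ` and `Y = Uᵀ D^α`, the push-through identity
`(X Y)^r = X (Y X)^{r-1} Y` reduces every power of the `n × n` matrix to a power of the `k × k`
matrix `Y X = Uᵀ D^{-1+2α} U Λ = K`; the trailing `Y D⁻¹` is `Uᵀ D^{-1+α}`.
-/

open Matrix

namespace Matrix

variable {m k R : Type*} [Fintype m] [DecidableEq m] [Fintype k] [DecidableEq k] [Semiring R]

theorem mul_pow_succ_eq_mul_pow_mul (X : Matrix m k R) (Y : Matrix k m R) (r : ℕ) :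
    (X * Y) ^ (r + 1) = X * (Y * X) ^ r * Y := by
  induction r with
  | zero => simp
  | succ r ih =>
    rw [pow_succ, ih, pow_succ]
    simp only [Matrix.mul_assoc]

theorem sum_Icc_mul_pow_mul {p : Type*} (X : Matrix m k R) (Y : Matrix k m R)
    (B : Matrix m p R) (T : ℕ) :
    ∑ r ∈ Finset.Icc 1 T, (X * Y) ^ r * B =
      X * (∑ r ∈ Finset.Icc 1 T, (Y * X) ^ (r - 1)) * (Y * B) := by
  rw [Matrix.mul_sum, Matrix.sum_mul]
  refine Finset.sum_congr rfl fun r hr => ?_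
  obtain ⟨s, rfl⟩ := Nat.exists_eq_add_of_le' (Finset.mem_Icc.mp hr).1
  rw [mul_pow_succ_eq_mul_pow_mul, Nat.add_sub_cancel, Matrix.mul_assoc _ Y]

theorem diagonal_rpow_mul_diagonal_rpow {n : Type*} [Fintype n] [DecidableEq n] {d : n → ℝ}
    (hd : ∀ i, 0 < d i) (a b : ℝ) :
    diagonal (fun i => d i ^ a) * diagonal (fun i => d i ^ b) =
      diagonal (fun i => d i ^ (a + b)) := by
  rw [diagonal_mul_diagonal]
  exact congrArg diagonal (funext fun i => (Real.rpow_add (hd i) a b).symm)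

end Matrix

theorem netmf_low_rank_power_sum_identity_general {n k : ℕ}
    (d : Fin n → ℝ) (hd : ∀ i, 0 < d i) (α : ℝ)
    (U : Matrix (Fin n) (Fin k) ℝ) (Λ : Matrix (Fin k) (Fin k) ℝ)
    (Ahat : Matrix (Fin n) (Fin n) ℝ)
    (hAhat : Ahat = Matrix.diagonal (fun i => d i ^ α) * U * Λ * Uᵀ *
        Matrix.diagonal (fun i => d i ^ α))
    (K : Matrix (Fin k) (Fin k) ℝ)
    (hK : K = Uᵀ * Matrix.diagonal (fun i => d i ^ (-(1 : ℝ) + 2 * α)) * U * Λ)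
    (T : ℕ) :
    ∑ r ∈ Finset.Icc 1 T,
        (Matrix.diagonal (fun i => d i ^ (-(1 : ℝ))) * Ahat) ^ r *
          Matrix.diagonal (fun i => d i ^ (-(1 : ℝ))) =
      Matrix.diagonal (fun i => d i ^ (-(1 : ℝ) + α)) * U * Λ *
        (∑ r ∈ Finset.Icc 1 T, K ^ (r - 1)) * Uᵀ *
        Matrix.diagonal (fun i => d i ^ (-(1 : ℝ) + α)) := by
  have hD := diagonal_rpow_mul_diagonal_rpow hd
  have h_factor : diagonal (fun i => d i ^ (-(1 : ℝ))) * Ahat =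
      (diagonal (fun i => d i ^ (-(1 : ℝ) + α)) * U * Λ) *
        (Uᵀ * diagonal (fun i => d i ^ α)) := by
    rw [hAhat, ← hD (-1) α]
    simp only [Matrix.mul_assoc]
  have h_inner : Uᵀ * diagonal (fun i => d i ^ α) *
      (diagonal (fun i => d i ^ (-(1 : ℝ) + α)) * U * Λ) = K := by
    rw [hK, show -(1 : ℝ) + 2 * α = α + (-1 + α) by ring, ← hD α (-1 + α)]
    simp only [Matrix.mul_assoc]
  have h_tail : Uᵀ * diagonal (fun i => d i ^ α) * diagonal (fun i => d i ^ (-(1 : ℝ))) =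
      Uᵀ * diagonal (fun i => d i ^ (-(1 : ℝ) + α)) := by
    rw [Matrix.mul_assoc, hD, add_comm]
  rw [h_factor, sum_Icc_mul_pow_mul, h_inner, h_tail]
  simp only [Matrix.mul_assoc]

/-- with `Â = D^α U Λ Uᵀ D^α` and `K = Uᵀ D^{-1+2α} U Λ`,
`Σ_{r=1}^{T} (D⁻¹ Â)ʳ D⁻¹ = D^{-1+α} U Λ (Σ_{r=1}^{T} K^{r-1}) Uᵀ D^{-1+α}`. -/
theorem netmf_low_rank_power_sum_identity {n k : ℕ}
    (d : Fin n → ℝ) (hd : ∀ i, 0 < d i) (α : ℝ)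
    (U : Matrix (Fin n) (Fin k) ℝ) (Λ : Matrix (Fin k) (Fin k) ℝ)
    (Ahat : Matrix (Fin n) (Fin n) ℝ)
    (hAhat : Ahat = Matrix.diagonal (fun i => d i ^ α) * U * Λ * Uᵀ *
        Matrix.diagonal (fun i => d i ^ α))
    (K : Matrix (Fin k) (Fin k) ℝ)
    (hK : K = Uᵀ * Matrix.diagonal (fun i => d i ^ (-(1 : ℝ) + 2 * α)) * U * Λ)
    (T : ℕ) (hT : 0 < T) :
    ∑ r ∈ Finset.Icc 1 T,
        (Matrix.diagonal (fun i => d i ^ (-(1 : ℝ))) * Ahat) ^ r *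
          Matrix.diagonal (fun i => d i ^ (-(1 : ℝ))) =
      Matrix.diagonal (fun i => d i ^ (-(1 : ℝ) + α)) * U * Λ *
        (∑ r ∈ Finset.Icc 1 T, K ^ (r - 1)) * Uᵀ *
        Matrix.diagonal (fun i => d i ^ (-(1 : ℝ) + α)) :=
  netmf_low_rank_power_sum_identity_general d hd α U Λ Ahat hAhat K hK T
end

section
/- Let Q ∈ ℝ^{n×l} have orthonormal columns (QᵀQ = I_l), let S ∈ ℝ^{l×l}, let X = Q S Qᵀ, let Π ∈ ℝ^{n×h} be any matrix, and let Z = Πᵀ X Π be the sketch of X. If G ∈ ℝ^{l×h} is any left inverse of ΠᵀQ, i.e. G (ΠᵀQ) = I_l, then G Z Gᵀ = S. Consequently, the core matrix S of the single-pass approximation X = Q S Qᵀ is exactly recovered from the sketch Z whenever ΠᵀQ has full column rank. -/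
open Matrix

theorem Matrix.mul_mul_mul_transpose_mul_transpose_of_mul_eq_one
    {m k R : Type*} [Fintype m] [Fintype k] [DecidableEq k] [CommSemiring R]
    {G : Matrix k m R} {B : Matrix m k R} (hGB : G * B = 1) (S : Matrix k k R) :
    G * (B * S * Bᵀ) * Gᵀ = S := by
  have hBG : Bᵀ * Gᵀ = 1 := by rw [← transpose_mul, hGB, transpose_one]
  calc G * (B * S * Bᵀ) * Gᵀ = G * B * S * (Bᵀ * Gᵀ) := by simp only [Matrix.mul_assoc]
    _ = S := by rw [hGB, hBG, Matrix.one_mul, Matrix.mul_one]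

theorem Matrix.transpose_mul_mul_mul_transpose_mul {m n k R : Type*} [Fintype m] [Fintype n]
    [Fintype k] [CommSemiring R] (P : Matrix n m R) (Q : Matrix n k R) (S : Matrix k k R) :
    Pᵀ * (Q * S * Qᵀ) * P = Pᵀ * Q * S * (Pᵀ * Q)ᵀ := by
  simp only [transpose_mul, transpose_transpose, Matrix.mul_assoc]

theorem single_pass_core_recovery_general {n l h : ℕ}
    (Q : Matrix (Fin n) (Fin l) ℝ)
    (S : Matrix (Fin l) (Fin l) ℝ)
    (X : Matrix (Fin n) (Fin n) ℝ) (hX : X = Q * S * Qᵀ)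
    (P : Matrix (Fin n) (Fin h) ℝ)
    (Z : Matrix (Fin h) (Fin h) ℝ) (hZ : Z = Pᵀ * X * P)
    (G : Matrix (Fin l) (Fin h) ℝ) (hG : G * (Pᵀ * Q) = 1) :
    G * Z * Gᵀ = S := by
  rw [hZ, hX, transpose_mul_mul_mul_transpose_mul]
  exact mul_mul_mul_transpose_mul_transpose_of_mul_eq_one hG S

/-- the core matrix `S` of the single-pass approximation
`X = Q S Qᵀ` is exactly recovered from the sketch `Z = Πᵀ X Π` by any left
inverse `G` of `Πᵀ Q`. -/
theorem single_pass_core_recovery {n l h : ℕ}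
    (Q : Matrix (Fin n) (Fin l) ℝ) (hQ : Qᵀ * Q = 1)
    (S : Matrix (Fin l) (Fin l) ℝ)
    (X : Matrix (Fin n) (Fin n) ℝ) (hX : X = Q * S * Qᵀ)
    (P : Matrix (Fin n) (Fin h) ℝ)
    (Z : Matrix (Fin h) (Fin h) ℝ) (hZ : Z = Pᵀ * X * P)
    (G : Matrix (Fin l) (Fin h) ℝ) (hG : G * (Pᵀ * Q) = 1) :
    G * Z * Gᵀ = S :=
  single_pass_core_recovery_general Q S X hX P Z hZ G hG
end

section
/- Let X be an n×n real symmetric matrix, let Q ∈ ℝ^{n×l} have orthonormal columns, and let S = Qᵀ X Q with eigen-decomposition S = W Λ Wᵀ (W orthogonal, Λ diagonal). Then the approximate eigenpairs (U, Λ) with U = Q W satisfy ‖X − U Λ Uᵀ‖_F ≤ 2‖X − Q Qᵀ X‖_F; that is, the eigen-decomposition error of the randomized symmetric approximation is controlled by twice the range-approximation (projection) error of Q. -/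
open Matrix

/-!
With `P = Q Qᵀ` and `E = X - P X`, symmetry of `X` gives `X - P X P = E + P Eᵀ`, and
`U Λ Uᵀ = Q S Qᵀ = P X P`. An orthogonal projection does not increase the Frobenius norm and
transposition preserves it, so the triangle inequality bounds the error by `2 ‖E‖_F`.
-/

open scoped Matrix.Norms.Frobenius

namespace Matrix

theorem sub_mul_compression_eq {R m k : Type*} [CommRing R] [Fintype m] [Fintype k]
    {X : Matrix m m R} (hX : Xᵀ = X) (Q : Matrix m k R) :
    X - Q * (Qᵀ * X * Q) * Qᵀ = (X - Q * (Qᵀ * X)) + Q * (Qᵀ * (X - Q * (Qᵀ * X))ᵀ) := by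
  simp only [transpose_sub, transpose_mul, transpose_transpose, hX, Matrix.mul_sub,
    Matrix.mul_assoc]
  abel

section Frobenius

variable {m n k : Type*} [Fintype m] [Fintype n] [Fintype k] [DecidableEq k]

theorem frobenius_norm_sq_eq_trace (A : Matrix m n ℝ) : ‖A‖ ^ 2 = (Aᵀ * A).trace := by
  rw [frobenius_norm_def, ← Real.sqrt_eq_rpow, Real.sq_sqrt (by positivity), Finset.sum_comm]
  simp [trace, mul_apply, sq]

theorem frobenius_norm_mul_of_transpose_mul_self {Q : Matrix m k ℝ} (hQ : Qᵀ * Q = 1)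
    (A : Matrix k n ℝ) : ‖Q * A‖ = ‖A‖ := by
  have hsq : ‖Q * A‖ ^ 2 = ‖A‖ ^ 2 := by
    rw [frobenius_norm_sq_eq_trace, frobenius_norm_sq_eq_trace, transpose_mul,
      Matrix.mul_assoc, ← Matrix.mul_assoc Qᵀ, hQ, Matrix.one_mul]
  exact (pow_left_inj₀ (norm_nonneg _) (norm_nonneg _) two_ne_zero).mp hsq

/-- Pythagoras for the orthogonal projection `Q Qᵀ`. -/
theorem frobenius_norm_sq_transpose_mul_add {Q : Matrix m k ℝ} (hQ : Qᵀ * Q = 1)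
    (A : Matrix m n ℝ) : ‖Qᵀ * A‖ ^ 2 + ‖A - Q * (Qᵀ * A)‖ ^ 2 = ‖A‖ ^ 2 := by
  have hQQ : ∀ B : Matrix k n ℝ, Qᵀ * (Q * B) = B := fun B => by
    rw [← Matrix.mul_assoc, hQ, Matrix.one_mul]
  simp only [frobenius_norm_sq_eq_trace, transpose_sub, transpose_mul, transpose_transpose,
    Matrix.mul_sub, Matrix.sub_mul, Matrix.mul_assoc, hQQ, trace_sub]
  ring

theorem frobenius_norm_transpose_mul_le {Q : Matrix m k ℝ} (hQ : Qᵀ * Q = 1)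
    (A : Matrix m n ℝ) : ‖Qᵀ * A‖ ≤ ‖A‖ := by
  refine (pow_le_pow_iff_left₀ (norm_nonneg _) (norm_nonneg _) two_ne_zero).mp ?_
  rw [← frobenius_norm_sq_transpose_mul_add hQ A]
  exact le_add_of_nonneg_right (sq_nonneg _)

end Frobenius

end Matrix

theorem frobNorm_eq_norm {m n : ℕ} (A : Matrix (Fin m) (Fin n) ℝ) : frobNorm A = ‖A‖ := by
  rw [frobNorm, frobenius_norm_def, Real.sqrt_eq_rpow]
  simp [Real.norm_eq_abs, sq_abs]

theorem randomized_symmetric_eig_error_bound_general {n l : ℕ}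
    (X : Matrix (Fin n) (Fin n) ℝ) (hX : X.IsSymm)
    (Q : Matrix (Fin n) (Fin l) ℝ) (hQ : Qᵀ * Q = 1)
    (S : Matrix (Fin l) (Fin l) ℝ) (hS : S = Qᵀ * X * Q)
    (W Λ : Matrix (Fin l) (Fin l) ℝ)
    (hdecomp : S = W * Λ * Wᵀ) :
    frobNorm (X - (Q * W) * Λ * (Q * W)ᵀ) ≤ 2 * frobNorm (X - Q * (Qᵀ * X)) := by
  set E := X - Q * (Qᵀ * X)
  have hUΛU : (Q * W) * Λ * (Q * W)ᵀ = Q * (Qᵀ * X * Q) * Qᵀ := by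
    rw [← hS, hdecomp]
    simp only [transpose_mul, Matrix.mul_assoc]
  have hprojection : ‖Q * (Qᵀ * Eᵀ)‖ ≤ ‖E‖ := by
    rw [frobenius_norm_mul_of_transpose_mul_self hQ, ← frobenius_norm_transpose E]
    exact frobenius_norm_transpose_mul_le hQ Eᵀ
  rw [frobNorm_eq_norm, frobNorm_eq_norm, hUΛU, sub_mul_compression_eq hX]
  calc ‖E + Q * (Qᵀ * Eᵀ)‖ ≤ ‖E‖ + ‖Q * (Qᵀ * Eᵀ)‖ := norm_add_le _ _
    _ ≤ 2 * ‖E‖ := by linarith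

/-- with `S = Qᵀ X Q = W Λ Wᵀ` and `U = Q W`, the error of the
approximate eigenpairs satisfies `‖X − U Λ Uᵀ‖_F ≤ 2 ‖X − Q Qᵀ X‖_F`. -/
theorem randomized_symmetric_eig_error_bound {n l : ℕ}
    (X : Matrix (Fin n) (Fin n) ℝ) (hX : X.IsSymm)
    (Q : Matrix (Fin n) (Fin l) ℝ) (hQ : Qᵀ * Q = 1)
    (S : Matrix (Fin l) (Fin l) ℝ) (hS : S = Qᵀ * X * Q)
    (W Λ : Matrix (Fin l) (Fin l) ℝ)
    (hW1 : Wᵀ * W = 1) (hW2 : W * Wᵀ = 1)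
    (hΛ : Λ.IsDiag)
    (hdecomp : S = W * Λ * Wᵀ) :
    frobNorm (X - (Q * W) * Λ * (Q * W)ᵀ) ≤ 2 * frobNorm (X - Q * (Qᵀ * X)) :=
  randomized_symmetric_eig_error_bound_general X hX Q hQ S hS W Λ hdecomp
end
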